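/- arXiv:2209.00135 — 8 statements merged into one kernel-verified Lean document; each statement's English description precedes it below -/
import Mathlib

section
/- (Instability at τ = 0.) Let a₂, a₁, c be real numbers with a₁ < 0 and c > 0. Then the cubic λ³ + a₂λ² + a₁λ + c, viewed over ℂ, has exactly one root with negative real part and exactly two roots (counted with multiplicity) with positive real part; in particular it has no purely imaginary roots. (Applied with c = a₀ + b₀, this says that the undelayed characteristic polynomial W(λ) at τ = 0 with b₁ = b₂ = 0 has precisely two roots in the open right half-plane.) -/
/-!
The cubic takes the value `c > 0` at `0` and tends to `-∞` at `-∞`, so it has a real root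
`r < 0`. Dividing by `X - r` leaves `X² + bX + d` with `b = a₂ + r` and `d = a₁ + r b`;
Vieta gives `r d = -c`, so `d > 0`, and then `a₁ = d - r b < 0` forces `b < 0`. A complex root
`x + iy` of such a quadratic satisfies `y (2x + b) = 0`: either `x = -b/2 > 0`, or the root is
real, and a real `x ≤ 0` would give `x² + bx + d ≥ d > 0`.
-/

open Polynomial

theorem exists_neg_root_of_cubic (a₂ a₁ c : ℝ) (hc : 0 < c) :
    ∃ r < 0, r ^ 3 + a₂ * r ^ 2 + a₁ * r + c = 0 := by
  set s : ℝ := 1 + |a₂| + |a₁| + c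
  have hs : 1 ≤ s := by linarith [abs_nonneg a₂, abs_nonneg a₁]
  have h_neg : (-s) ^ 3 + a₂ * (-s) ^ 2 + a₁ * (-s) + c < 0 := by
    nlinarith [le_abs_self a₂, neg_abs_le a₁, abs_nonneg a₂, abs_nonneg a₁,
      mul_le_mul_of_nonneg_right (le_abs_self a₂) (sq_nonneg s)]
  obtain ⟨r, ⟨-, hr0⟩, hr⟩ := intermediate_value_Icc (by linarith : -s ≤ 0)
    (by fun_prop : ContinuousOn (fun x : ℝ ↦ x ^ 3 + a₂ * x ^ 2 + a₁ * x + c) (Set.Icc (-s) 0))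
    ⟨h_neg.le, by simpa using hc.le⟩
  refine ⟨r, hr0.lt_of_ne ?_, hr⟩
  rintro rfl
  exact hc.ne' (by simpa using hr)

theorem cubic_eq_X_sub_C_mul {R : Type*} [CommRing R] {a₂ a₁ c r : R}
    (hr : r ^ 3 + a₂ * r ^ 2 + a₁ * r + c = 0) :
    X ^ 3 + C a₂ * X ^ 2 + C a₁ * X + C c
      = (X - C r) * (X ^ 2 + C (a₂ + r) * X + C (a₁ + r * (a₂ + r))) := by
  have h : C (r ^ 3 + a₂ * r ^ 2 + a₁ * r + c) = 0 := by rw [hr, map_zero]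
  simp only [map_add, map_mul, map_pow] at h ⊢
  linear_combination h

theorem Complex.re_pos_of_sq_add_mul_add_eq_zero {b d : ℝ} (hb : b < 0) (hd : 0 < d) {z : ℂ}
    (hz : z ^ 2 + b * z + d = 0) : 0 < z.re := by
  have hre := congrArg Complex.re hz
  have him := congrArg Complex.im hz
  simp only [sq, add_re, mul_re, ofReal_re, ofReal_im, zero_mul, sub_zero, zero_re, add_im,
    mul_im, add_zero, zero_im] at hre him
  by_cases hy : z.im = 0
  · rw [hy] at hre
    by_contra! hx
    nlinarith
  · have : 2 * z.re + b = 0 := mul_left_cancel₀ hy (by linarith)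
    linarith

theorem exists_roots_quadratic_eq_pair_of_re_pos {b d : ℝ} (hb : b < 0) (hd : 0 < d) :
    ∃ z₁ z₂ : ℂ, (X ^ 2 + C (b : ℂ) * X + C (d : ℂ)).roots = {z₁, z₂}
      ∧ 0 < z₁.re ∧ 0 < z₂.re := by
  set q : ℂ[X] := X ^ 2 + C (b : ℂ) * X + C (d : ℂ)
  have hq : q.natDegree = 2 := by unfold q; compute_degree!
  obtain ⟨z₁, z₂, hz⟩ := Multiset.card_eq_two.1 <|
    (IsAlgClosed.splits q).natDegree_eq_card_roots.symm.trans hq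
  have hre : ∀ z ∈ q.roots, 0 < z.re := fun z hz ↦
    Complex.re_pos_of_sq_add_mul_add_eq_zero hb hd <| by
      simpa only [IsRoot.def, eval_add, eval_pow, eval_X, eval_mul, eval_C, q]
        using (mem_roots'.1 hz).2
  exact ⟨z₁, z₂, hz, hre z₁ (by simp [hz]), hre z₂ (by simp [hz])⟩

/-- Instability at τ = 0: For real a₂, a₁ < 0 and c > 0, the cubic
λ³ + a₂λ² + a₁λ + c over ℂ has exactly one root with negative real part and
exactly two roots (with multiplicity) with positive real part; in particular no
purely imaginary roots. -/
theorem instability_at_zero_delay (a₂ a₁ c : ℝ) (ha₁ : a₁ < 0) (hc : 0 < c) :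
    ∃ z₁ z₂ z₃ : ℂ,
      (Polynomial.X ^ 3 + Polynomial.C (a₂ : ℂ) * Polynomial.X ^ 2
        + Polynomial.C (a₁ : ℂ) * Polynomial.X + Polynomial.C (c : ℂ)).roots
        = {z₁, z₂, z₃}
      ∧ z₁.re < 0 ∧ 0 < z₂.re ∧ 0 < z₃.re := by
  obtain ⟨r, hr, hroot⟩ := exists_neg_root_of_cubic a₂ a₁ c hc
  have hd : 0 < a₁ + r * (a₂ + r) := by nlinarith
  have hb : a₂ + r < 0 := by nlinarith
  obtain ⟨z₂, z₃, hq, hz₂, hz₃⟩ := exists_roots_quadratic_eq_pair_of_re_pos hb hd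
  have hroot' : (r : ℂ) ^ 3 + a₂ * r ^ 2 + a₁ * r + c = 0 := by exact_mod_cast hroot
  refine ⟨r, z₂, z₃, ?_, by simpa using hr, hz₂, hz₃⟩
  push_cast at hq
  rw [cubic_eq_X_sub_C_mul hroot', roots_mul (Monic.ne_zero (by monicity!)), roots_X_sub_C, hq]
  rfl
end

section
/- (Theorem, geometric form.) Assume 0 > b₀ > −a₀, a₁ < 0, a₂ > a₁²/(2|b₀|), τ > 0 with |b₀|τ² < 2a₂, and that there exists ω̄ > 0 such that W_r(ω̄) < 0 and W_i(ω) > 0 for all ω ∈ (0, ω̄). Then W_r(0) = a₀ + b₀ > 0, W_i(0) = 0, and for every ω > 0 either W_i(ω) > 0 or W_r(ω) < 0; that is, the Mikhailov hodograph ω ↦ W(iω) starts on the positive real axis and never meets the closed fourth quadrant {x ≥ 0, y ≤ 0} for ω > 0. -/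
/-! The real part `W_r(ω) = -a₂ω² + a₀ + b₀ cos(ωτ)` is strictly decreasing on `[0, ∞)`: since
`|sin t| ≤ |t|`, its derivative `-2a₂ω - b₀τ sin(ωτ)` is at most `-(2a₂ - |b₀|τ²) ω < 0`. Hence once
`W_r(ω̄) < 0` it stays negative for all `ω ≥ ω̄`, while `W_i > 0` on `(0, ω̄)` by assumption. -/

open Real Set

section QuadraticPlusCosine

variable (a c b τ : ℝ)

theorem hasDerivAt_neg_mul_sq_add_mul_cos (x : ℝ) :
    HasDerivAt (fun ω : ℝ => -a * ω ^ 2 + c + b * cos (ω * τ))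
      (-(2 * a * x) - b * τ * sin (x * τ)) x := by
  have hcos : HasDerivAt (fun ω : ℝ => cos (ω * τ)) (-sin (x * τ) * τ) x := by
    exact (hasDerivAt_cos (x * τ)).comp x (hasDerivAt_mul_const τ)
  have hsq : HasDerivAt (fun ω : ℝ => -a * ω ^ 2) (-a * (2 * x)) x := by
    simpa using (hasDerivAt_pow 2 x).const_mul (-a)
  exact ((hsq.add_const c).add (hcos.const_mul b)).congr_deriv (by ring)

theorem abs_mul_mul_sin_mul_le (x : ℝ) : |b * τ * sin (x * τ)| ≤ |b| * τ ^ 2 * |x| := by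
  calc |b * τ * sin (x * τ)| = |b| * |τ| * |sin (x * τ)| := by rw [abs_mul, abs_mul]
    _ ≤ |b| * |τ| * |x * τ| := mul_le_mul_of_nonneg_left abs_sin_le_abs (by positivity)
    _ = |b| * τ ^ 2 * |x| := by rw [abs_mul, ← sq_abs τ]; ring

variable {a b τ}

theorem strictAntiOn_neg_mul_sq_add_mul_cos (h : |b| * τ ^ 2 < 2 * a) :
    StrictAntiOn (fun ω : ℝ => -a * ω ^ 2 + c + b * cos (ω * τ)) (Ici 0) := by
  have hderiv := hasDerivAt_neg_mul_sq_add_mul_cos a c b τ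
  refine strictAntiOn_of_deriv_neg (convex_Ici 0)
    (fun x _ => (hderiv x).continuousAt.continuousWithinAt) fun x hx => ?_
  rw [interior_Ici] at hx
  have hx : 0 < x := hx
  have hsin := neg_le_of_abs_le (abs_mul_mul_sin_mul_le b τ x)
  rw [abs_of_pos hx] at hsin
  rw [(hderiv x).deriv]
  nlinarith

end QuadraticPlusCosine

theorem hodograph_avoids_fourth_quadrant_general (a₀ a₁ a₂ b₀ τ : ℝ)
    (hba : -a₀ < b₀)
    (hτ2 : |b₀| * τ ^ 2 < 2 * a₂)
    (Wr Wi : ℝ → ℝ)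
    (hWr : Wr = fun ω : ℝ => -a₂ * ω ^ 2 + a₀ + b₀ * Real.cos (ω * τ))
    (hWi : Wi = fun ω : ℝ => -ω ^ 3 + a₁ * ω - b₀ * Real.sin (ω * τ))
    (hbar : ∃ ωbar : ℝ, 0 < ωbar ∧ Wr ωbar < 0 ∧
      ∀ ω : ℝ, 0 < ω → ω < ωbar → 0 < Wi ω) :
    Wr 0 = a₀ + b₀ ∧ 0 < a₀ + b₀ ∧ Wi 0 = 0 ∧
      ∀ ω : ℝ, 0 < ω → 0 < Wi ω ∨ Wr ω < 0 := by
  obtain ⟨ωbar, hωbar, hWr_ωbar, hWi_pos⟩ := hbar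
  have hanti : StrictAntiOn Wr (Ici 0) := hWr ▸ strictAntiOn_neg_mul_sq_add_mul_cos a₀ hτ2
  refine ⟨by simp [hWr], by linarith, by simp [hWi], fun ω hω => ?_⟩
  rcases lt_or_ge ω ωbar with hlt | hge
  · exact Or.inl (hWi_pos ω hω hlt)
  · exact Or.inr ((hanti.antitoneOn hωbar.le hω.le hge).trans_lt hWr_ωbar)

/-- Theorem, geometric form: Under the stated conditions the
Mikhailov hodograph ω ↦ W(iω) starts on the positive real axis and never meets
the closed fourth quadrant for ω > 0. -/
theorem hodograph_avoids_fourth_quadrant (a₀ a₁ a₂ b₀ τ : ℝ)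
    (hb : b₀ < 0) (hba : -a₀ < b₀) (ha₁ : a₁ < 0)
    (ha₂ : a₁ ^ 2 / (2 * |b₀|) < a₂)
    (hτ : 0 < τ) (hτ2 : |b₀| * τ ^ 2 < 2 * a₂)
    (Wr Wi : ℝ → ℝ)
    (hWr : Wr = fun ω : ℝ => -a₂ * ω ^ 2 + a₀ + b₀ * Real.cos (ω * τ))
    (hWi : Wi = fun ω : ℝ => -ω ^ 3 + a₁ * ω - b₀ * Real.sin (ω * τ))
    (hbar : ∃ ωbar : ℝ, 0 < ωbar ∧ Wr ωbar < 0 ∧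
      ∀ ω : ℝ, 0 < ω → ω < ωbar → 0 < Wi ω) :
    Wr 0 = a₀ + b₀ ∧ 0 < a₀ + b₀ ∧ Wi 0 = 0 ∧
      ∀ ω : ℝ, 0 < ω → 0 < Wi ω ∨ Wr ω < 0 :=
  hodograph_avoids_fourth_quadrant_general a₀ a₁ a₂ b₀ τ hba hτ2 Wr Wi hWr hWi hbar
end

section
/- Assume a₁ < 0, b₀ < 0, τ ≥ 0 and |b₀|τ > |a₁|. Then for every ω > 0 with ω² < 6(|b₀|τ − |a₁|)/(|b₀|τ³ + 6) one has W_i(ω) > 0. (This follows from the lower bound W_i(ω) ≥ ω(|b₀|τ − |a₁| − ω²(|b₀|τ³ + 6)/6), obtained from sin x ≥ x − x³/6.) -/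
open Real

lemma le_neg_cube_add_mul_sub_mul_sin {a₁ b₀ τ ω : ℝ} (hb : b₀ ≤ 0) (hτ : 0 ≤ τ) (hω : 0 ≤ ω) :
    ω * (|b₀| * τ - |a₁| - ω ^ 2 * (|b₀| * τ ^ 3 + 6) / 6) ≤
      -ω ^ 3 + a₁ * ω - b₀ * sin (ω * τ) := by
  have hsin : ω * τ - (ω * τ) ^ 3 / 6 ≤ sin (ω * τ) := sin_ge_sub_cube (by positivity)
  have hb_sin : |b₀| * (ω * τ - (ω * τ) ^ 3 / 6) ≤ -b₀ * sin (ω * τ) := by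
    rw [abs_of_nonpos hb]
    exact mul_le_mul_of_nonneg_left hsin (neg_nonneg.mpr hb)
  have ha : -|a₁| * ω ≤ a₁ * ω := mul_le_mul_of_nonneg_right (neg_abs_le a₁) hω
  linear_combination hb_sin + ha

theorem Wi_pos_of_small_omega_general (a₁ b₀ τ : ℝ)
    (hb : b₀ < 0) (h : |a₁| < |b₀| * τ)
    (Wi : ℝ → ℝ)
    (hWi : Wi = fun ω : ℝ => -ω ^ 3 + a₁ * ω - b₀ * Real.sin (ω * τ)) :
    ∀ ω : ℝ, 0 < ω → ω ^ 2 < 6 * (|b₀| * τ - |a₁|) / (|b₀| * τ ^ 3 + 6) →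
      0 < Wi ω := by
  intro ω hω hω2
  have hτ : 0 < τ := pos_of_mul_pos_right ((abs_nonneg a₁).trans_lt h) (abs_nonneg b₀)
  have hgap : 0 < |b₀| * τ - |a₁| - ω ^ 2 * (|b₀| * τ ^ 3 + 6) / 6 := by
    have := (lt_div_iff₀ (by positivity : 0 < |b₀| * τ ^ 3 + 6)).mp hω2
    linarith
  subst hWi
  exact (mul_pos hω hgap).trans_le (le_neg_cube_add_mul_sub_mul_sin hb.le hτ.le hω.le)

/-- If a₁ < 0, b₀ < 0, τ ≥ 0 and |b₀|τ > |a₁|, then W_i(ω) > 0 for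
every ω > 0 with ω² < 6(|b₀|τ − |a₁|)/(|b₀|τ³ + 6). -/
theorem Wi_pos_of_small_omega (a₀ a₁ a₂ b₀ τ : ℝ)
    (ha₁ : a₁ < 0) (hb : b₀ < 0) (hτ : 0 ≤ τ) (h : |a₁| < |b₀| * τ)
    (Wi : ℝ → ℝ)
    (hWi : Wi = fun ω : ℝ => -ω ^ 3 + a₁ * ω - b₀ * Real.sin (ω * τ)) :
    ∀ ω : ℝ, 0 < ω → ω ^ 2 < 6 * (|b₀| * τ - |a₁|) / (|b₀| * τ ^ 3 + 6) →
      0 < Wi ω :=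
  Wi_pos_of_small_omega_general a₁ b₀ τ hb h Wi hWi
end

section
/- Assume b₀ < 0, a₀ > |b₀|, τ ≥ 0 and a₂ > |b₀|τ²/2. Then for every real ω with ω² > (a₀ − |b₀|)/(a₂ − |b₀|τ²/2) one has W_r(ω) < 0. (This follows from the upper bound W_r(ω) ≤ a₀ − |b₀| + ω²(|b₀|τ²/2 − a₂), obtained from cos x ≥ 1 − x²/2.) -/
/-! Since `cos x ≥ 1 - x²/2` and `b₀ < 0`, `W_r(ω) ≤ (a₀ - |b₀|) - ω² (a₂ - |b₀|τ²/2)`,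
which is negative exactly beyond the threshold on `ω²`. -/

open Real

lemma mul_cos_le_of_nonpos {b : ℝ} (hb : b ≤ 0) (x : ℝ) :
    b * cos x ≤ -|b| + |b| * x ^ 2 / 2 := by
  rw [abs_of_nonpos hb]
  nlinarith [mul_le_mul_of_nonpos_left (one_sub_sq_div_two_le_cos (x := x)) hb]

lemma quadratic_add_mul_cos_le {a₀ a₂ b₀ : ℝ} (hb : b₀ ≤ 0) (τ ω : ℝ) :
    -a₂ * ω ^ 2 + a₀ + b₀ * cos (ω * τ) ≤ a₀ - |b₀| - ω ^ 2 * (a₂ - |b₀| * τ ^ 2 / 2) := by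
  have := mul_cos_le_of_nonpos hb (ω * τ)
  linarith [show (ω * τ) ^ 2 = ω ^ 2 * τ ^ 2 by ring]

theorem Wr_neg_of_large_omega_general (a₀ a₂ b₀ τ : ℝ)
    (hb : b₀ < 0) (ha₂ : |b₀| * τ ^ 2 / 2 < a₂)
    (Wr : ℝ → ℝ)
    (hWr : Wr = fun ω : ℝ => -a₂ * ω ^ 2 + a₀ + b₀ * Real.cos (ω * τ)) :
    ∀ ω : ℝ, (a₀ - |b₀|) / (a₂ - |b₀| * τ ^ 2 / 2) < ω ^ 2 → Wr ω < 0 := by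
  intro ω hω
  subst hWr
  have hden : 0 < a₂ - |b₀| * τ ^ 2 / 2 := by linarith
  have hlarge : a₀ - |b₀| < ω ^ 2 * (a₂ - |b₀| * τ ^ 2 / 2) := (div_lt_iff₀ hden).mp hω
  linarith [quadratic_add_mul_cos_le (a₀ := a₀) (a₂ := a₂) hb.le τ ω]

/-- If b₀ < 0, a₀ > |b₀|, τ ≥ 0 and a₂ > |b₀|τ²/2, then
W_r(ω) < 0 for every real ω with ω² > (a₀ − |b₀|)/(a₂ − |b₀|τ²/2). -/
theorem Wr_neg_of_large_omega (a₀ a₁ a₂ b₀ τ : ℝ)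
    (hb : b₀ < 0) (ha₀ : |b₀| < a₀) (hτ : 0 ≤ τ) (ha₂ : |b₀| * τ ^ 2 / 2 < a₂)
    (Wr : ℝ → ℝ)
    (hWr : Wr = fun ω : ℝ => -a₂ * ω ^ 2 + a₀ + b₀ * Real.cos (ω * τ)) :
    ∀ ω : ℝ, (a₀ - |b₀|) / (a₂ - |b₀| * τ ^ 2 / 2) < ω ^ 2 → Wr ω < 0 :=
  Wr_neg_of_large_omega_general a₀ a₂ b₀ τ hb ha₂ Wr hWr
end

section
/- Assume b₀ < 0, τ ≥ 0 and a₂ > |b₀|τ²/2. Then the inequality 6(|b₀|τ − |a₁|)/(|b₀|τ³ + 6) > (a₀ − |b₀|)/(a₂ − |b₀|τ²/2) holds if and only if g(τ) < 0. -/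
/-! Both denominators are positive, so the inequality is equivalent to the negativity of the
cross difference, and that cross difference is exactly `6 |b₀| g(τ)`. -/

lemma cross_difference_eq_mul_cubic (a₀ c a₂ B τ : ℝ) (hB : B ≠ 0) :
    (a₀ - B) * (B * τ ^ 3 + 6) - 6 * (B * τ - c) * (a₂ - B * τ ^ 2 / 2)
      = 6 * B * (((a₀ + 2 * B) / 6) * τ ^ 3 - (c / 2) * τ ^ 2 - a₂ * τ + (c * a₂ + a₀ - B) / B) := by
  field_simp
  ring

/-- If b₀ < 0, τ ≥ 0 and a₂ > |b₀|τ²/2, then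
6(|b₀|τ − |a₁|)/(|b₀|τ³ + 6) > (a₀ − |b₀|)/(a₂ − |b₀|τ²/2) iff g(τ) < 0. -/
theorem bounds_compat_iff_g_neg (a₀ a₁ a₂ b₀ τ : ℝ)
    (hb : b₀ < 0) (hτ : 0 ≤ τ) (ha₂ : |b₀| * τ ^ 2 / 2 < a₂)
    (g : ℝ → ℝ)
    (hg : g = fun t : ℝ => ((a₀ + 2 * |b₀|) / 6) * t ^ 3 - (|a₁| / 2) * t ^ 2
      - a₂ * t + (|a₁| * a₂ + a₀ - |b₀|) / |b₀|) :
    (a₀ - |b₀|) / (a₂ - |b₀| * τ ^ 2 / 2)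
        < 6 * (|b₀| * τ - |a₁|) / (|b₀| * τ ^ 3 + 6)
      ↔ g τ < 0 := by
  subst hg
  have hB : 0 < |b₀| := abs_pos.mpr hb.ne
  have hD₁ : 0 < a₂ - |b₀| * τ ^ 2 / 2 := by linarith
  have hD₂ : 0 < |b₀| * τ ^ 3 + 6 := by positivity
  rw [div_lt_div_iff₀ hD₁ hD₂, ← sub_neg, cross_difference_eq_mul_cubic _ _ _ _ _ hB.ne']
  exact smul_neg_iff_of_pos_left (by positivity : (0 : ℝ) < 6 * |b₀|)
end

section
/- (Corollary, existence of ω̄.) Assume a₁ < 0, 0 > b₀ > −a₀ (so a₀ > |b₀|), τ̄ ≥ 0 with a₂ > |b₀|τ̄²/2, and g(τ̄) < 0. Then there exists ω̄ > 0 such that W_r(ω̄) < 0 and W_i(ω) > 0 for all ω ∈ (0, ω̄). -/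
/-!
Put `β = |b₀|`. The Taylor bounds `cos x ≥ 1 - x²/2` and `sin x ≥ x - x³/6` (for `x ≥ 0`) give
`W_r(ω) ≤ C - Dω²` and `W_i(ω) ≥ Aω - Bω³` for `ω ≥ 0`, where `A = βτ̄ + a₁`, `B = 1 + βτ̄³/6`,
`C = a₀ - β` and `D = a₂ - βτ̄²/2`. The hypotheses make `B`, `C`, `D` positive, and
`β g(τ̄) = CB - AD`, so `g(τ̄) < 0` forces `A > 0`. Then `ω̄ = √(A/B)` works: `Aω - Bω³ > 0` on
`(0, ω̄)`, and `C - Dω̄² = (CB - AD)/B < 0`.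
-/

open Real

lemma neg_mul_sq_add_mul_cos_le {a₀ a₂ b : ℝ} (τ ω : ℝ) (hb : b ≤ 0) :
    -a₂ * ω ^ 2 + a₀ + b * cos (ω * τ) ≤ (a₀ + b) - (a₂ + b * τ ^ 2 / 2) * ω ^ 2 := by
  have := mul_le_mul_of_nonpos_left (one_sub_sq_div_two_le_cos (x := ω * τ)) hb
  linarith

lemma cubic_le_neg_cube_add_mul_sub_mul_sin {a₁ b τ ω : ℝ} (hb : b ≤ 0) (hτ : 0 ≤ τ)
    (hω : 0 ≤ ω) :
    (a₁ - b * τ) * ω - (1 - b * τ ^ 3 / 6) * ω ^ 3 ≤ -ω ^ 3 + a₁ * ω - b * sin (ω * τ) := by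
  have := mul_le_mul_of_nonpos_left (sin_ge_sub_cube (mul_nonneg hω hτ)) hb
  linarith

lemma mul_g_eq_mul_sub_mul {a₀ a₂ α β : ℝ} (τ : ℝ) (hβ : β ≠ 0) :
    β * (((a₀ + 2 * β) / 6) * τ ^ 3 - (α / 2) * τ ^ 2 - a₂ * τ + (α * a₂ + a₀ - β) / β) =
      (a₀ - β) * (1 + β * τ ^ 3 / 6) - (β * τ - α) * (a₂ - β * τ ^ 2 / 2) := by
  field_simp
  ring

lemma exists_sub_mul_sq_neg_and_cubic_pos {A B C D : ℝ} (hB : 0 < B) (hC : 0 < C) (hD : 0 < D)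
    (h : C * B < A * D) :
    ∃ w, 0 < w ∧ C - D * w ^ 2 < 0 ∧ ∀ ω, 0 < ω → ω < w → 0 < A * ω - B * ω ^ 3 := by
  have hA : 0 < A := pos_of_mul_pos_left ((mul_pos hC hB).trans h) hD.le
  have hAB : 0 < A / B := div_pos hA hB
  refine ⟨√(A / B), sqrt_pos.2 hAB, ?_, fun ω hω hωw => ?_⟩
  · rw [sq_sqrt hAB.le, sub_neg, mul_div_assoc', lt_div_iff₀ hB]
    linarith
  · have hsq : B * ω ^ 2 < A := by
      rw [← lt_div_iff₀' hB, ← lt_sqrt hω.le]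
      exact hωw
    calc 0 < ω * (A - B * ω ^ 2) := mul_pos hω (sub_pos.2 hsq)
      _ = A * ω - B * ω ^ 3 := by ring

/-- Corollary, existence of ω̄: Under the stated conditions there
exists ω̄ > 0 with W_r(ω̄) < 0 and W_i(ω) > 0 for all ω ∈ (0, ω̄). -/
theorem exists_omega_bar (a₀ a₁ a₂ b₀ τbar : ℝ)
    (ha₁ : a₁ < 0) (hb : b₀ < 0) (hba : -a₀ < b₀)
    (hτ : 0 ≤ τbar) (ha₂ : |b₀| * τbar ^ 2 / 2 < a₂)
    (Wr Wi g : ℝ → ℝ)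
    (hWr : Wr = fun ω : ℝ => -a₂ * ω ^ 2 + a₀ + b₀ * Real.cos (ω * τbar))
    (hWi : Wi = fun ω : ℝ => -ω ^ 3 + a₁ * ω - b₀ * Real.sin (ω * τbar))
    (hg : g = fun t : ℝ => ((a₀ + 2 * |b₀|) / 6) * t ^ 3 - (|a₁| / 2) * t ^ 2
      - a₂ * t + (|a₁| * a₂ + a₀ - |b₀|) / |b₀|)
    (hgτ : g τbar < 0) :
    ∃ ωbar : ℝ, 0 < ωbar ∧ Wr ωbar < 0 ∧
      ∀ ω : ℝ, 0 < ω → ω < ωbar → 0 < Wi ω := by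
  subst hWr hWi hg
  rw [abs_of_neg hb] at ha₂
  have hkey : (a₀ + b₀) * (1 - b₀ * τbar ^ 3 / 6) <
      (a₁ - b₀ * τbar) * (a₂ + b₀ * τbar ^ 2 / 2) := by
    have := mul_neg_of_pos_of_neg (neg_pos.2 hb) hgτ
    rw [abs_of_neg hb, abs_of_neg ha₁, mul_g_eq_mul_sub_mul τbar (neg_ne_zero.2 hb.ne)] at this
    linarith
  obtain ⟨w, hw, hWr, hWi⟩ := exists_sub_mul_sq_neg_and_cubic_pos
    (by nlinarith [pow_nonneg hτ 3]) (by linarith) (by linarith) hkey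
  refine ⟨w, hw, (neg_mul_sq_add_mul_cos_le τbar w hb.le).trans_lt hWr, fun ω hω hωw => ?_⟩
  exact (hWi ω hω hωw).trans_le (cubic_le_neg_cube_add_mul_sub_mul_sin hb.le hτ hω.le)
end

section
/- (Corollary, composite form.) Assume a₁ < 0, 0 > b₀ > −a₀, a₂ > a₁²/(2|b₀|), τ̄ > 0 with |b₀|τ̄² < 2a₂, and g(τ̄) < 0. Then W_r(0) > 0, W_i(0) = 0, and for every ω > 0 either W_i(ω) > 0 or W_r(ω) < 0; i.e., the curve ω ↦ (W_r(ω), W_i(ω)) starts on the positive real axis and avoids the closed fourth quadrant for all ω > 0. -/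
/-!
With `b₀ < 0`, the bounds `sin x ≥ x - x³/6` (for `x ≥ 0`) and `cos x ≥ 1 - x²/2` give
`W_i(ω) ≥ ω ((a₁ - b₀τ̄) - ω² (1 - b₀τ̄³/6))` and `W_r(ω) ≤ (a₀ + b₀) - ω² (a₂ + b₀τ̄²/2)`.
Multiplied by `b₀`, the condition `g(τ̄) < 0` says exactly
`(a₀ + b₀)(1 - b₀τ̄³/6) < (a₁ - b₀τ̄)(a₂ + b₀τ̄²/2)`, so every `ω² > 0` either makes the first
lower bound positive or the second upper bound negative.
-/

open Real

noncomputable def charRe (a₀ a₂ b₀ τ ω : ℝ) : ℝ := -a₂ * ω ^ 2 + a₀ + b₀ * cos (ω * τ)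

noncomputable def charIm (a₁ b₀ τ ω : ℝ) : ℝ := -ω ^ 3 + a₁ * ω - b₀ * sin (ω * τ)

lemma charIm_pos {a₁ b₀ τ ω : ℝ} (hb : b₀ ≤ 0) (hτ : 0 ≤ τ) (hω : 0 < ω)
    (h : ω ^ 2 * (1 - b₀ * τ ^ 3 / 6) < a₁ - b₀ * τ) : 0 < charIm a₁ b₀ τ ω := by
  have hsin := mul_le_mul_of_nonpos_left (sin_ge_sub_cube (mul_nonneg hω.le hτ)) hb
  have hlower : 0 < ω * ((a₁ - b₀ * τ) - ω ^ 2 * (1 - b₀ * τ ^ 3 / 6)) :=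
    mul_pos hω (by linarith)
  unfold charIm
  nlinarith

lemma charRe_neg {a₀ a₂ b₀ τ ω : ℝ} (hb : b₀ ≤ 0)
    (h : a₀ + b₀ < ω ^ 2 * (a₂ + b₀ * τ ^ 2 / 2)) : charRe a₀ a₂ b₀ τ ω < 0 := by
  have hcos := mul_le_mul_of_nonpos_left (one_sub_sq_div_two_le_cos (x := ω * τ)) hb
  unfold charRe
  nlinarith

lemma mul_lt_or_lt_mul_of_mul_lt_mul {x q p r : ℝ} (hp : 0 < p) (hr : 0 < r) (h : x * p < q * r)
    (s : ℝ) : s * p < q ∨ x < s * r := by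
  refine (lt_or_ge (s * p) q).imp id fun hq => ?_
  have : x * p < s * r * p := by nlinarith
  exact lt_of_mul_lt_mul_right this hp.le

lemma mul_cubic_eq {a₀ a₁ a₂ b₀ τ : ℝ} (ha₁ : a₁ < 0) (hb : b₀ < 0) :
    b₀ * (((a₀ + 2 * |b₀|) / 6) * τ ^ 3 - (|a₁| / 2) * τ ^ 2 - a₂ * τ
      + (|a₁| * a₂ + a₀ - |b₀|) / |b₀|)
      = (a₁ - b₀ * τ) * (a₂ + b₀ * τ ^ 2 / 2) - (a₀ + b₀) * (1 - b₀ * τ ^ 3 / 6) := by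
  rw [abs_of_neg ha₁, abs_of_neg hb]
  field_simp [hb.ne]
  ring

theorem corollary_composite_general (a₀ a₁ a₂ b₀ τbar : ℝ)
    (ha₁ : a₁ < 0) (hb : b₀ < 0) (hba : -a₀ < b₀)
    (hτ : 0 < τbar) (hτ2 : |b₀| * τbar ^ 2 < 2 * a₂)
    (Wr Wi g : ℝ → ℝ)
    (hWr : Wr = fun ω : ℝ => -a₂ * ω ^ 2 + a₀ + b₀ * Real.cos (ω * τbar))
    (hWi : Wi = fun ω : ℝ => -ω ^ 3 + a₁ * ω - b₀ * Real.sin (ω * τbar))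
    (hg : g = fun t : ℝ => ((a₀ + 2 * |b₀|) / 6) * t ^ 3 - (|a₁| / 2) * t ^ 2
      - a₂ * t + (|a₁| * a₂ + a₀ - |b₀|) / |b₀|)
    (hgτ : g τbar < 0) :
    0 < Wr 0 ∧ Wi 0 = 0 ∧ ∀ ω : ℝ, 0 < ω → 0 < Wi ω ∨ Wr ω < 0 := by
  subst hWr hWi hg
  refine ⟨by simp; linarith, by simp, fun ω hω => ?_⟩
  have hmargin : (a₀ + b₀) * (1 - b₀ * τbar ^ 3 / 6)
      < (a₁ - b₀ * τbar) * (a₂ + b₀ * τbar ^ 2 / 2) := by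
    have := mul_pos_of_neg_of_neg hb hgτ
    rw [mul_cubic_eq ha₁ hb] at this
    linarith
  have hp : 0 < 1 - b₀ * τbar ^ 3 / 6 := by nlinarith [pow_pos hτ 3]
  have hr : 0 < a₂ + b₀ * τbar ^ 2 / 2 := by rw [abs_of_neg hb] at hτ2; linarith
  rcases mul_lt_or_lt_mul_of_mul_lt_mul hp hr hmargin (ω ^ 2) with h | h
  · exact Or.inl (charIm_pos hb.le hτ.le hω h)
  · exact Or.inr (charRe_neg hb.le h)

/-- Corollary, composite form: Under the stated conditions the
curve ω ↦ (W_r(ω), W_i(ω)) starts on the positive real axis and avoids the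
closed fourth quadrant for all ω > 0. -/
theorem corollary_composite (a₀ a₁ a₂ b₀ τbar : ℝ)
    (ha₁ : a₁ < 0) (hb : b₀ < 0) (hba : -a₀ < b₀)
    (ha₂ : a₁ ^ 2 / (2 * |b₀|) < a₂)
    (hτ : 0 < τbar) (hτ2 : |b₀| * τbar ^ 2 < 2 * a₂)
    (Wr Wi g : ℝ → ℝ)
    (hWr : Wr = fun ω : ℝ => -a₂ * ω ^ 2 + a₀ + b₀ * Real.cos (ω * τbar))
    (hWi : Wi = fun ω : ℝ => -ω ^ 3 + a₁ * ω - b₀ * Real.sin (ω * τbar))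
    (hg : g = fun t : ℝ => ((a₀ + 2 * |b₀|) / 6) * t ^ 3 - (|a₁| / 2) * t ^ 2
      - a₂ * t + (|a₁| * a₂ + a₀ - |b₀|) / |b₀|)
    (hgτ : g τbar < 0) :
    0 < Wr 0 ∧ Wi 0 = 0 ∧ ∀ ω : ℝ, 0 < ω → 0 < Wi ω ∨ Wr ω < 0 :=
  corollary_composite_general a₀ a₁ a₂ b₀ τbar ha₁ hb hba hτ hτ2 Wr Wi g hWr hWi hg hgτ
end

section
/- (Remark.) Assume a₁ < 0, b₀ < 0 and τ ≥ 0. If there exists ω̄ > 0 such that W_i(ω) > 0 for all ω ∈ (0, ω̄), then τ > a₁/b₀ (note a₁/b₀ = |a₁|/|b₀| > 0). -/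
open Real

theorem mul_lt_of_pos_neg_cube_add_mul_sub_mul_sin {a b τ ω : ℝ} (hb : b < 0) (hτ : 0 ≤ τ)
    (hω : 0 < ω) (h : 0 < -ω ^ 3 + a * ω - b * sin (ω * τ)) : b * τ < a := by
  have hsin : -b * sin (ω * τ) ≤ -b * (ω * τ) :=
    mul_le_mul_of_nonneg_left (sin_le (by positivity)) (by linarith)
  have hprod : 0 < ω * (a - b * τ - ω ^ 2) := by linarith
  have hfactor : 0 < a - b * τ - ω ^ 2 := pos_of_mul_pos_right hprod hω.le
  linarith [sq_nonneg ω]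

theorem delay_lower_bound_general (a₁ b₀ τ : ℝ)
    (hb : b₀ < 0) (hτ : 0 ≤ τ)
    (Wi : ℝ → ℝ)
    (hWi : Wi = fun ω : ℝ => -ω ^ 3 + a₁ * ω - b₀ * Real.sin (ω * τ))
    (hbar : ∃ ωbar : ℝ, 0 < ωbar ∧ ∀ ω : ℝ, 0 < ω → ω < ωbar → 0 < Wi ω) :
    a₁ / b₀ < τ := by
  obtain ⟨ωbar, hωbar, hpos⟩ := hbar
  have hW : 0 < Wi (ωbar / 2) := hpos _ (by positivity) (by linarith)
  rw [hWi] at hW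
  rw [div_lt_iff_of_neg hb, mul_comm]
  exact mul_lt_of_pos_neg_cube_add_mul_sub_mul_sin hb hτ (by positivity) hW

/-- Remark: If a₁ < 0, b₀ < 0, τ ≥ 0 and W_i(ω) > 0 on some
nonempty interval (0, ω̄), then τ > a₁/b₀. -/
theorem delay_lower_bound (a₀ a₁ a₂ b₀ τ : ℝ)
    (ha₁ : a₁ < 0) (hb : b₀ < 0) (hτ : 0 ≤ τ)
    (Wi : ℝ → ℝ)
    (hWi : Wi = fun ω : ℝ => -ω ^ 3 + a₁ * ω - b₀ * Real.sin (ω * τ))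
    (hbar : ∃ ωbar : ℝ, 0 < ωbar ∧ ∀ ω : ℝ, 0 < ω → ω < ωbar → 0 < Wi ω) :
    a₁ / b₀ < τ :=
  delay_lower_bound_general a₁ b₀ τ hb hτ Wi hWi hbar
end
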